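/- For all integers t ≥ 2 and all partitions λ, the quantity |λ| − ∑_{j≥0} |β_j(t; λ)| is a nonnegative integer divisible by t − 1. -/

import Mathlib

open PowerSeries

/-- The type of all integer partitions (of any size). -/
abbrev Ptn : Type := Σ n : ℕ, Nat.Partition n

/-- Build a partition from an arbitrary multiset of naturals by discarding the zeros. -/
def ptnOfMultiset (m : Multiset ℕ) : Ptn :=
  ⟨(m.filter (fun x => 0 < x)).sum,
   ⟨m.filter (fun x => 0 < x), fun hi => (Multiset.mem_filter.mp hi).2, rfl⟩⟩

/-- The `i`-th largest part of a partition (0-indexed), or `0` if there is none. -/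
def partAt (p : Ptn) (i : ℕ) : ℕ := ((p.2.parts.sort (· ≤ ·)).reverse).getD i 0

/-- The beta-set (set of first-column hook lengths) of `p`, computed with `K` beads:
`{λ_i + (K - 1 - i) : 0 ≤ i < K}`. -/
def betaSet (p : Ptn) (K : ℕ) : Finset ℕ :=
  (Finset.range K).image (fun i => partAt p i + (K - 1 - i))

/-- The partition whose beta-set (for `S.card` beads) is the finite set `S`. -/
def ptnOfBetaSet (S : Finset ℕ) : Ptn :=
  ptnOfMultiset (((S.sort (· ≤ ·)).mapIdx (fun i b => b - i) : List ℕ) : Multiset ℕ)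

/-- A normalized number of beads for the `t`-abacus of `p`: divisible by `t` and
at least the number of parts, which makes the `t`-quotient labelling canonical. -/
def beads (t : ℕ) (p : Ptn) : ℕ := t * p.2.parts.card

/-- The `t`-core of a partition, via the abacus: push all beads down their runners. -/
def core (t : ℕ) (p : Ptn) : Ptn :=
  ptnOfBetaSet ((Finset.range t).biUnion (fun r =>
    (Finset.range (((betaSet p (beads t p)).filter (fun b => b % t = r)).card)).image
      (fun j => r + t * j)))

/-- The `t`-quotient of a partition, via the abacus: the `r`-th component is read off
from the beads on runner `r`. -/
def quotient (t : ℕ) (p : Ptn) : List Ptn :=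
  (List.range t).map (fun r =>
    ptnOfBetaSet (((betaSet p (beads t p)).filter (fun b => b % t = r)).image (fun b => b / t)))

/-- Row `j` of the `t`-core pre-tower of `p`: `α_0 = [p]`, and `α_{j+1}` is obtained by
concatenating the `t`-quotients of the partitions in `α_j`. -/
def preTower (t : ℕ) (p : Ptn) : ℕ → List Ptn
  | 0 => [p]
  | j + 1 => (preTower t p j).flatMap (quotient t)

/-- Row `j` of the `t`-core tower of `p`: the `t`-cores of the partitions in `α_j`. -/
def towerRow (t : ℕ) (p : Ptn) (j : ℕ) : List Ptn := (preTower t p j).map (core t)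

/-- The total size of a row: the sum of the sizes of its partitions. -/
def rowSize (l : List Ptn) : ℕ := (l.map (fun q => q.1)).sum

/-- The formal power series `(q^m; q^m)_∞ ^ s`, defined coefficientwise (the `n`-th
coefficient of the infinite product agrees with that of the finite product
`∏_{k=1}^n (1 - q^{mk})^s`). -/
noncomputable def eulerProd (m s : ℕ) : PowerSeries ℚ :=
  PowerSeries.mk fun n =>
    PowerSeries.coeff (R := ℚ) n (∏ k ∈ Finset.Icc 1 n, (1 - PowerSeries.X ^ (m * k)) ^ s)

/-- The series `G(q^m) = ∑_{k ≥ 1} σ_1(k) q^{mk}`. -/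
noncomputable def Gm (m : ℕ) : PowerSeries ℚ :=
  PowerSeries.mk fun n => if m ∣ n ∧ n ≠ 0 then (∑ d ∈ (n / m).divisors, (d : ℚ)) else 0
/-- The number of cells in column `j` (0-indexed) of the Young diagram of `p`. -/
def colLen (p : Ptn) (j : ℕ) : ℕ := Multiset.countP (fun a => j < a) p.2.parts

/-- The hook length of the cell in row `i`, column `j` (0-indexed) of `p`:
arm length + leg length + 1. -/
def hookLength (p : Ptn) (i j : ℕ) : ℕ := (partAt p i - j) + (colLen p j - (i + 1))

/-- A partition is a `t`-core if no hook length of a cell of its Young diagram is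
divisible by `t`. -/
def IsTCore (t : ℕ) (p : Ptn) : Prop :=
  ∀ i j : ℕ, j < partAt p i → ¬ t ∣ hookLength p i j

/-- A partition is a generalized `(j,t)`-core if every partition in row `j+1` of its
`t`-core pre-tower is empty. -/
def IsGenCore (t j : ℕ) (p : Ptn) : Prop :=
  ∀ q ∈ preTower t p (j + 1), q.1 = 0

/-- `T_{j,t}(q) = ∑_{λ ∈ P} |β_j(t;λ)| q^{|λ|}`. -/
noncomputable def Tgen (t j : ℕ) : PowerSeries ℚ :=
  PowerSeries.mk fun n => ∑ p : Nat.Partition n, (rowSize (towerRow t ⟨n, p⟩ j) : ℚ)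

/-- The number of partitions of `n`. -/
noncomputable def pfun (n : ℕ) : ℕ := Nat.card (Nat.Partition n)

/-- `a_t(n)`: the sum of the sizes of the `t`-cores of all partitions of `n`. -/
noncomputable def acore (t n : ℕ) : ℕ := ∑ p : Nat.Partition n, (core t ⟨n, p⟩).1

/-- The number of `t`-regular partitions of `n` (no part divisible by `t`). -/
noncomputable def preg (t n : ℕ) : ℕ :=
  Nat.card {p : Nat.Partition n // ∀ x ∈ p.parts, ¬ t ∣ x}

/-!
On the `t`-abacus the weight `∑ B - (0 + 1 + ⋯ + (#B - 1))` of a beta-set `B` splits runner by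
runner, which gives `|λ| = |core_t λ| + t · (total size of the t-quotient of λ)`. Applied to a
whole row of the pre-tower, with `s_j` its total size and `c_j = |β_j|`, this is
`c_j + t s_{j+1} = s_j`; hence `|λ| = ∑_j t^j c_j` and `|λ| - ∑_j c_j = ∑_j (t^j - 1) c_j`.
The sums are finite because `t^j s_j ≤ |λ| < t^j` forces `s_j = 0` once `j ≥ |λ|`.
-/

open Finset

lemma List.le_getElem_of_pairwise_lt {l : List ℕ} (hl : l.Pairwise (· < ·)) :
    ∀ (i : ℕ) (h : i < l.length), i ≤ l[i]
  | 0, _ => Nat.zero_le _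
  | i + 1, h => by
    have := List.pairwise_iff_getElem.mp hl i (i + 1) (by omega) h (by omega)
    have := l.le_getElem_of_pairwise_lt hl i (by omega)
    omega

lemma List.sum_mapIdx_sub_add_sum_range {l : List ℕ} (hl : l.Pairwise (· < ·)) :
    (l.mapIdx fun i b => b - i).sum + ∑ i ∈ Finset.range l.length, i = l.sum := by
  rw [List.mapIdx_eq_ofFn, List.sum_ofFn, ← Fin.sum_univ_eq_sum_range, ← sum_add_distrib]
  conv_rhs => rw [← List.ofFn_getElem (xs := l), List.sum_ofFn]
  refine sum_congr rfl fun i _ => ?_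
  have := l.le_getElem_of_pairwise_lt hl i i.2
  simp only [List.get_eq_getElem]
  omega

lemma List.sum_range_getD {l : List ℕ} {K : ℕ} (hK : l.length ≤ K) :
    ∑ i ∈ Finset.range K, l.getD i 0 = l.sum := by
  rw [← sum_range_add_sum_Ico _ hK,
    Finset.sum_eq_zero fun i hi => List.getD_eq_default _ _ (mem_Ico.mp hi).1, add_zero,
    ← Fin.sum_univ_eq_sum_range]
  conv_rhs => rw [← List.ofFn_getElem (xs := l), List.sum_ofFn]
  exact Finset.sum_congr rfl fun i _ => List.getD_eq_getElem _ _ i.2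

lemma ptnOfMultiset_fst (m : Multiset ℕ) : (ptnOfMultiset m).1 = m.sum := by
  change (m.filter (0 < ·)).sum = m.sum
  conv_rhs => rw [← Multiset.filter_add_not (0 < ·) m]
  rw [Multiset.sum_add, Multiset.sum_eq_zero (s := m.filter (¬ 0 < ·)), add_zero]
  intro x hx
  simpa using (Multiset.mem_filter.mp hx).2

lemma ptnOfBetaSet_fst_add (S : Finset ℕ) :
    (ptnOfBetaSet S).1 + ∑ i ∈ range #S, i = ∑ b ∈ S, b := by
  rw [ptnOfBetaSet, ptnOfMultiset_fst, Multiset.sum_coe, ← length_sort (· ≤ ·),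
    List.sum_mapIdx_sub_add_sum_range (sortedLT_sort S).pairwise, sum_eq_multiset_sum,
    Multiset.map_id']
  exact congrArg Multiset.sum (sort_eq S (· ≤ ·))

lemma partAt_antitone (p : Ptn) : Antitone (partAt p) := by
  intro i j hij
  have hsorted : ((p.2.parts.sort (· ≤ ·)).reverse).SortedGE :=
    List.sortedGE_reverse.mpr (List.sortedLE_iff_pairwise.mpr (Multiset.pairwise_sort _ _))
  unfold partAt
  by_cases hj : j < ((p.2.parts.sort (· ≤ ·)).reverse).length
  · rw [List.getD_eq_getElem _ _ hj, List.getD_eq_getElem _ _ (hij.trans_lt hj)]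
    exact List.sortedGE_iff_getElem_ge_getElem_of_le.mp hsorted hij
  · rw [List.getD_eq_default _ _ (not_lt.mp hj)]
    exact Nat.zero_le _

lemma sum_range_partAt (p : Ptn) {K : ℕ} (hK : p.2.parts.card ≤ K) :
    ∑ i ∈ range K, partAt p i = p.1 := by
  rw [← p.2.parts_sum, ← Multiset.sort_eq p.2.parts (· ≤ ·), Multiset.sum_coe,
    ← List.sum_reverse]
  exact List.sum_range_getD (by simpa using hK)

lemma betaSet_strictAntiOn (p : Ptn) (K : ℕ) :
    StrictAntiOn (fun i => partAt p i + (K - 1 - i)) (Set.Iio K) := by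
  intro i _ j hj hij
  have := partAt_antitone p hij.le
  simp only [Set.mem_Iio] at hj
  dsimp only
  omega

lemma card_betaSet (p : Ptn) (K : ℕ) : #(betaSet p K) = K := by
  rw [betaSet, card_image_of_injOn (by simpa using (betaSet_strictAntiOn p K).injOn), card_range]

lemma sum_betaSet (p : Ptn) {K : ℕ} (hK : p.2.parts.card ≤ K) :
    ∑ b ∈ betaSet p K, b = p.1 + ∑ i ∈ range K, i := by
  rw [betaSet, sum_image (by simpa using (betaSet_strictAntiOn p K).injOn), sum_add_distrib,
    sum_range_partAt p hK, ← sum_range_reflect]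
  congr 1
  refine sum_congr rfl fun i hi => ?_
  have := mem_range.mp hi
  omega

lemma ptnOfBetaSet_betaSet_fst (p : Ptn) {K : ℕ} (hK : p.2.parts.card ≤ K) :
    (ptnOfBetaSet (betaSet p K)).1 = p.1 := by
  have := ptnOfBetaSet_fst_add (betaSet p K)
  rw [card_betaSet, sum_betaSet p hK] at this
  omega

def runner (t r : ℕ) (B : Finset ℕ) : Finset ℕ := B.filter (· % t = r)

/-- The beta-set obtained by pushing the beads of `B` to the top of their runners. -/
def abacusCore (t : ℕ) (B : Finset ℕ) : Finset ℕ :=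
  (range t).biUnion fun r => (range #(runner t r B)).image (r + t * ·)

section Abacus

variable {t : ℕ}

lemma sum_card_runner (ht : 0 < t) (B : Finset ℕ) : ∑ r ∈ range t, #(runner t r B) = #B :=
  (card_eq_sum_card_fiberwise fun b _ => mem_range.mpr (Nat.mod_lt b ht)).symm

lemma sum_eq_sum_runner (ht : 0 < t) (B : Finset ℕ) :
    ∑ b ∈ B, b = ∑ r ∈ range t, (t * ∑ b ∈ runner t r B, b / t + #(runner t r B) * r) := by
  rw [← sum_fiberwise_of_maps_to (g := (· % t)) fun b _ => mem_range.mpr (Nat.mod_lt b ht)]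
  refine sum_congr rfl fun r _ => ?_
  rw [mul_sum, card_eq_sum_ones, sum_mul, ← sum_add_distrib]
  refine sum_congr rfl fun b hb => ?_
  rw [← (mem_filter.mp hb).2, one_mul, Nat.div_add_mod]

lemma injOn_div_runner (B : Finset ℕ) (r : ℕ) : Set.InjOn (· / t) (runner t r B : Set ℕ) := by
  intro b hb b' hb' h
  rw [← Nat.div_add_mod b t, ← Nat.div_add_mod b' t, (mem_filter.mp hb).2,
    (mem_filter.mp hb').2]
  simp_all

lemma pairwiseDisjoint_image_add_mul (n : ℕ → ℕ) :
    (range t : Set ℕ).PairwiseDisjoint fun r => (range (n r)).image (r + t * ·) := by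
  intro r hr r' hr' hne
  simp only [coe_range, Set.mem_Iio] at hr hr'
  simp only [Function.onFun, disjoint_left, mem_image]
  rintro _ ⟨j, -, rfl⟩ ⟨j', -, h⟩
  have := congrArg (· % t) h
  simp only [Nat.add_mul_mod_self_left, Nat.mod_eq_of_lt hr, Nat.mod_eq_of_lt hr'] at this
  exact hne this.symm

lemma injective_add_mul (ht : 0 < t) (r : ℕ) : Function.Injective (r + t * ·) :=
  (add_right_injective r).comp (mul_right_injective₀ ht.ne')

lemma card_abacusCore (ht : 0 < t) (B : Finset ℕ) : #(abacusCore t B) = #B := by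
  rw [abacusCore, card_biUnion (pairwiseDisjoint_image_add_mul _), ← sum_card_runner ht B]
  exact sum_congr rfl fun r _ => by rw [card_image_of_injective _ (injective_add_mul ht r),
    card_range]

lemma sum_abacusCore (ht : 0 < t) (B : Finset ℕ) : ∑ b ∈ abacusCore t B, b =
    ∑ r ∈ range t, (#(runner t r B) * r + t * ∑ j ∈ range #(runner t r B), j) := by
  rw [abacusCore, sum_biUnion (pairwiseDisjoint_image_add_mul _)]
  refine sum_congr rfl fun r _ => ?_
  rw [sum_image fun _ _ _ _ h => injective_add_mul ht r h, sum_add_distrib, mul_sum]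
  simp

lemma ptnOfBetaSet_fst_eq_abacusCore_add (ht : 0 < t) (B : Finset ℕ) :
    (ptnOfBetaSet B).1 = (ptnOfBetaSet (abacusCore t B)).1 +
      t * ∑ r ∈ range t, (ptnOfBetaSet ((runner t r B).image (· / t))).1 := by
  have hB := ptnOfBetaSet_fst_add B
  have hcore := ptnOfBetaSet_fst_add (abacusCore t B)
  have hquot (r : ℕ) := ptnOfBetaSet_fst_add ((runner t r B).image (· / t))
  simp only [card_image_of_injOn (injOn_div_runner B _),
    sum_image (injOn_div_runner B _)] at hquot
  rw [card_abacusCore ht B, sum_abacusCore ht B] at hcore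
  rw [sum_eq_sum_runner ht B] at hB
  have hsplit : ∑ r ∈ range t, (t * ∑ b ∈ runner t r B, b / t + #(runner t r B) * r) =
      t * ∑ r ∈ range t, (ptnOfBetaSet ((runner t r B).image (· / t))).1 +
        ∑ r ∈ range t, (#(runner t r B) * r + t * ∑ j ∈ range #(runner t r B), j) := by
    rw [mul_sum, ← sum_add_distrib]
    refine sum_congr rfl fun r _ => ?_
    rw [← hquot r]
    ring
  omega

end Abacus

lemma core_fst_add_mul_rowSize_quotient {t : ℕ} (ht : 0 < t) (p : Ptn) :
    (core t p).1 + t * rowSize (quotient t p) = p.1 := by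
  have hK : p.2.parts.card ≤ beads t p := Nat.le_mul_of_pos_left _ ht
  rw [← ptnOfBetaSet_betaSet_fst p hK, ptnOfBetaSet_fst_eq_abacusCore_add ht, rowSize, quotient,
    List.map_map]
  rfl

lemma rowSize_map_core_add_mul_rowSize_flatMap {t : ℕ} (ht : 0 < t) (l : List Ptn) :
    rowSize (l.map (core t)) + t * rowSize (l.flatMap (quotient t)) = rowSize l := by
  induction l with
  | nil => rfl
  | cons p l ih =>
    have hp := core_fst_add_mul_rowSize_quotient ht p
    simp only [rowSize, List.map_cons, List.flatMap_cons, List.map_append, List.sum_cons,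
      List.sum_append] at ih hp ⊢
    rw [mul_add, ← ih, ← hp]
    ring

lemma rowSize_towerRow_add_mul_rowSize_preTower {t : ℕ} (ht : 0 < t) (p : Ptn) (j : ℕ) :
    rowSize (towerRow t p j) + t * rowSize (preTower t p (j + 1)) = rowSize (preTower t p j) :=
  rowSize_map_core_add_mul_rowSize_flatMap ht _

section Telescoping

variable {t : ℕ} {c s : ℕ → ℕ}

lemma sum_pow_mul_add_pow_mul_eq (hrec : ∀ j, c j + t * s (j + 1) = s j) (M : ℕ) :
    ∑ j ∈ range M, t ^ j * c j + t ^ M * s M = s 0 := by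
  induction M with
  | zero => simp
  | succ M ih => rw [sum_range_succ, ← ih, ← hrec M]; ring

lemma sub_tsum_eq_sum_pow_sub_one_mul (hrec : ∀ j, c j + t * s (j + 1) = s j) (ht : 2 ≤ t) :
    (s 0 : ℤ) - ∑' j, (c j : ℤ) = ∑ j ∈ range (s 0), ((t : ℤ) ^ j - 1) * c j := by
  have hs {j : ℕ} (hj : s 0 ≤ j) : s j = 0 := by
    by_contra hne
    have := sum_pow_mul_add_pow_mul_eq hrec j
    have : j < t ^ j := Nat.lt_pow_self ht
    have : t ^ j ≤ t ^ j * s j := Nat.le_mul_of_pos_right _ (Nat.pos_of_ne_zero hne)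
    omega
  have hc {j : ℕ} (hj : s 0 ≤ j) : c j = 0 := by
    have := hrec j
    have := hs hj
    omega
  have hsum := sum_pow_mul_add_pow_mul_eq hrec (s 0)
  rw [hs le_rfl, mul_zero, add_zero] at hsum
  rw [tsum_eq_sum fun j hj => by simp [hc (not_lt.mp (mem_range.not.mp hj))]]
  nth_rw 1 [← hsum]
  push_cast
  rw [← sum_sub_distrib]
  exact sum_congr rfl fun j _ => by ring

end Telescoping

/-- `|λ| - ∑_{j≥0} |β_j(t;λ)|` is a nonnegative integer divisible by `t-1`. -/
theorem defect_integral (t : ℕ) (ht : 2 ≤ t) (p : Ptn) :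
    0 ≤ (p.1 : ℤ) - ∑' j : ℕ, (rowSize (towerRow t p j) : ℤ) ∧
    ((t : ℤ) - 1) ∣ ((p.1 : ℤ) - ∑' j : ℕ, (rowSize (towerRow t p j) : ℤ)) := by
  have hp : rowSize (preTower t p 0) = p.1 := by simp [preTower, rowSize]
  have hdefect := sub_tsum_eq_sum_pow_sub_one_mul (c := fun j => rowSize (towerRow t p j))
    (s := fun j => rowSize (preTower t p j))
    (rowSize_towerRow_add_mul_rowSize_preTower (by omega) p) ht
  simp only [hp] at hdefect
  rw [hdefect]
  have ht1 : (1 : ℤ) ≤ t := by exact_mod_cast (by omega : 1 ≤ t)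
  refine ⟨sum_nonneg fun j _ => ?_, dvd_sum fun j _ => ?_⟩
  · exact mul_nonneg (sub_nonneg.mpr (one_le_pow₀ ht1)) (Int.natCast_nonneg _)
  · simpa using (sub_dvd_pow_sub_pow (t : ℤ) 1 j).mul_right _
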